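/- Suppose the coefficients H^j_k satisfy the big-cell associativity conditions H^{j+k}_m - H^j_{m+k} - H^k_{j+m} + \sum_{l=1}^{j-1} H^k_{j-l} H^l_m + \sum_{l=1}^{k-1} H^j_{k-l} H^l_m - \sum_{l=1}^{m-1} H^k_{m-l} H^j_l = 0 for all j,k,m \ge 1 (with H^i_m = 0 for m \le 0). Then n H^i_n = i H^n_i for all i,n \ge 1. -/

import Mathlib

/-!
Put `w_j = z^{-j} + ∑_{m ≥ 1} H^j_m z^m` in `ℂ((z))`. Comparing coefficients, the associativity
conditions say exactly that
`w_j w_k = w_{j+k} + ∑_{l<j} H^k_{j-l} w_l + ∑_{l<k} H^j_{k-l} w_l + H^k_j + H^j_k`,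
so by induction on `n` every `w_n` is a polynomial in `w_1`.
For the Euler derivation `D = z d/dz`, the pairing `(F, G) ↦ [z^0] (F · DG)` vanishes on `ℂ[u]`
for every `u`: `u^a D(u^b)` is a multiple of `D(u^{a+b})`, and `[z^0] DF = 0` for all `F`.
On the other hand `[z^0] (w_i · D w_n) = i H^n_i - n H^i_n`.
-/

open HahnSeries LaurentSeries

noncomputable section

namespace LaurentSeries

variable {R : Type*} [CommRing R]

theorem algebraMap_eq_C (c : R) : algebraMap R R⸨X⸩ c = C c := by
  rw [algebraMap_apply', PowerSeries.algebraMap_apply, Algebra.algebraMap_self, RingHom.id_apply,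
    ofPowerSeries_C]

def eulerDerivAux (F : R⸨X⸩) : R⸨X⸩ where
  coeff n := n * F.coeff n
  isPWO_support' := F.isPWO_support.mono fun _ => right_ne_zero_of_mul

theorem support_eulerDerivAux_subset (F : R⸨X⸩) : (eulerDerivAux F).support ⊆ F.support :=
  fun _ => right_ne_zero_of_mul

def eulerDeriv : Derivation R R⸨X⸩ R⸨X⸩ where
  toFun := eulerDerivAux
  map_add' F G := by ext n; simp [eulerDerivAux, mul_add]
  map_smul' c F := by
    ext n; simp [eulerDerivAux, Algebra.smul_def, algebraMap_eq_C, mul_left_comm]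
  map_one_eq_zero' := by ext n; simp +contextual [eulerDerivAux, HahnSeries.coeff_one]
  leibniz' F G := by
    ext n
    simp only [LinearMap.coe_mk, AddHom.coe_mk, smul_eq_mul, HahnSeries.coeff_add]
    rw [mul_comm G, coeff_mul_left' F.isPWO_support (support_eulerDerivAux_subset F),
      coeff_mul_right' G.isPWO_support (support_eulerDerivAux_subset G), add_comm,
      ← Finset.sum_add_distrib]
    change n * (F * G).coeff n = _
    rw [HahnSeries.coeff_mul, Finset.mul_sum]
    refine Finset.sum_congr rfl fun ab hab => ?_
    simp only [eulerDerivAux, ← (Finset.mem_antidiagonal.mp hab).2.2, Int.cast_add]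
    ring

@[simp]
theorem coeff_eulerDeriv (F : R⸨X⸩) (n : ℤ) : (eulerDeriv F).coeff n = n * F.coeff n := rfl

theorem eulerDeriv_single (a : ℤ) (r : R) : eulerDeriv (single a r) = single a (a * r) := by
  ext n
  by_cases h : n = a <;> simp [h]

theorem coeff_zero_mul_eq_zero {F G : R⸨X⸩} (hF : ∀ n ≤ 0, F.coeff n = 0)
    (hG : ∀ n < 0, G.coeff n = 0) : (F * G).coeff 0 = 0 := by
  rw [HahnSeries.coeff_mul]
  refine Finset.sum_eq_zero fun ab hab => ?_
  obtain ⟨ha, hb, hab⟩ := Finset.mem_antidiagonal.mp hab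
  by_cases h : ab.1 ≤ 0
  · exact absurd (hF _ h) ha
  · exact absurd (hG _ (by omega)) hb

variable [IsAddTorsionFree R]

theorem coeff_zero_pow_mul_eulerDeriv (u : R⸨X⸩) (n : ℕ) :
    (u ^ n * eulerDeriv u).coeff 0 = 0 := by
  have h : (eulerDeriv (u ^ (n + 1))).coeff 0 = 0 := by
    rw [coeff_eulerDeriv, Int.cast_zero, zero_mul]
  rw [Derivation.leibniz_pow, add_tsub_cancel_right, smul_eq_mul, HahnSeries.coeff_nsmul,
    Pi.smul_apply] at h
  exact (smul_eq_zero.mp h).resolve_left n.succ_ne_zero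

theorem coeff_zero_aeval_mul_eulerDeriv (u : R⸨X⸩) (p : Polynomial R) :
    (Polynomial.aeval u p * eulerDeriv u).coeff 0 = 0 := by
  induction p using Polynomial.induction_on' with
  | add p q hp hq => rw [map_add, add_mul, HahnSeries.coeff_add, hp, hq, add_zero]
  | monomial n a =>
    rw [Polynomial.aeval_monomial, mul_assoc, algebraMap_eq_C, C_mul_eq_smul,
      HahnSeries.coeff_smul, coeff_zero_pow_mul_eulerDeriv, smul_zero]

theorem coeff_zero_mul_eulerDeriv_of_mem_adjoin {u F G : R⸨X⸩} (hF : F ∈ Algebra.adjoin R {u})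
    (hG : G ∈ Algebra.adjoin R {u}) : (F * eulerDeriv G).coeff 0 = 0 := by
  rw [Algebra.adjoin_singleton_eq_range_aeval] at hF hG
  obtain ⟨p, rfl⟩ := hF
  obtain ⟨q, rfl⟩ := hG
  simp only [AlgHom.toRingHom_eq_coe, RingHom.coe_coe]
  rw [Derivation.map_aeval, smul_eq_mul, ← mul_assoc, ← map_mul]
  exact coeff_zero_aeval_mul_eulerDeriv u _

end LaurentSeries

namespace BigCell

variable {R : Type*} [CommRing R] (H : ℕ → ℕ → R)

def IsAssoc : Prop :=
  ∀ j k m : ℕ, 1 ≤ j → 1 ≤ k → 1 ≤ m →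
    H (j + k) m - H j (m + k) - H k (j + m)
      + ∑ l ∈ Finset.Ico 1 j, H k (j - l) * H l m
      + ∑ l ∈ Finset.Ico 1 k, H j (k - l) * H l m
      - ∑ l ∈ Finset.Ico 1 m, H k (m - l) * H j l = 0

-- The constant term is `0` whatever `H j 0` is: the paper's convention `H^j_0 = 0`.
def tail (j : ℕ) : PowerSeries R := PowerSeries.mk fun m => if m = 0 then 0 else H j m

def series (j : ℕ) : R⸨X⸩ := single (-(j : ℤ)) 1 + (tail H j : R⸨X⸩)

theorem coeff_tail_mul_tail (j k m : ℕ) :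
    PowerSeries.coeff m (tail H j * tail H k) = ∑ l ∈ Finset.Ico 1 m, H j l * H k (m - l) := by
  rw [PowerSeries.coeff_mul, Finset.Nat.sum_antidiagonal_eq_sum_range_succ
    (fun a b => PowerSeries.coeff a (tail H j) * PowerSeries.coeff b (tail H k))]
  have hsub : Finset.Ico 1 m ⊆ Finset.range m.succ := fun l hl => by
    simp only [Finset.mem_Ico, Finset.mem_range] at hl ⊢; omega
  rw [← Finset.sum_subset hsub fun l _ hl => ?_]
  · refine Finset.sum_congr rfl fun l hl => ?_
    simp only [Finset.mem_Ico] at hl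
    simp [tail, show l ≠ 0 by omega, show m - l ≠ 0 by omega]
  · simp only [Finset.mem_Ico, not_and_or, not_le, not_lt] at hl
    rcases hl with hl | hl
    · simp [tail, show l = 0 by omega]
    · simp [tail, show m - l = 0 by omega]

theorem coeff_coe_tail (j : ℕ) (v : ℤ) :
    (tail H j : R⸨X⸩).coeff v = if 0 < v then H j v.toNat else 0 := by
  rw [PowerSeries.coeff_coe]
  rcases lt_trichotomy v 0 with h | rfl | h
  · simp [h, h.not_gt]
  · simp [tail]
  · simp [tail, h.not_gt, h, show v.natAbs = v.toNat by omega]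

theorem coeff_series (j : ℕ) (v : ℤ) :
    (series H j).coeff v = (if v = -j then 1 else 0) + if 0 < v then H j v.toNat else 0 := by
  simp [series, coeff_single, coeff_coe_tail]

theorem coeff_series_mul_series (j k : ℕ) (v : ℤ) :
    (series H j * series H k).coeff v = (if v = -(j + k : ℕ) then 1 else 0)
      + (if 0 < v + j then H k (v + j).toNat else 0)
      + (if 0 < v + k then H j (v + k).toNat else 0)
      + if v < 0 then 0 else ∑ l ∈ Finset.Ico 1 v.natAbs, H j l * H k (v.natAbs - l) := by
  have hsingle :
      single (-((j + k : ℕ) : ℤ)) (1 : R) = single (-(j : ℤ)) 1 * single (-(k : ℤ)) 1 := by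
    rw [single_mul_single, one_mul, Nat.cast_add, neg_add]
  have hsplit : series H j * series H k = single (-((j + k : ℕ) : ℤ)) 1
      + single (-(j : ℤ)) 1 * (tail H k : R⸨X⸩) + (tail H j : R⸨X⸩) * single (-(k : ℤ)) 1
      + ((tail H j * tail H k : PowerSeries R) : R⸨X⸩) := by
    rw [hsingle, series, series, PowerSeries.coe_mul]
    ring
  rw [hsplit]
  simp only [HahnSeries.coeff_add, coeff_single, coeff_single_mul, coeff_mul_single,
    coeff_coe_tail, one_mul, mul_one, sub_neg_eq_add]
  rw [PowerSeries.coeff_coe, coeff_tail_mul_tail]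
  -- the two sides differ only in their `Decidable` instances
  congr

theorem series_mul_series (hH : IsAssoc H) {j k : ℕ} (hj : 1 ≤ j) (hk : 1 ≤ k) :
    series H j * series H k = series H (j + k)
      + ∑ l ∈ Finset.Ico 1 j, C (H k (j - l)) * series H l
      + ∑ l ∈ Finset.Ico 1 k, C (H j (k - l)) * series H l + C (H k j + H j k) := by
  ext v
  simp only [C_mul_eq_smul]
  simp only [coeff_series_mul_series, HahnSeries.coeff_add, HahnSeries.coeff_sum,
    HahnSeries.coeff_smul, coeff_series, smul_eq_mul, C_apply, coeff_single]
  rcases lt_trichotomy v 0 with hv | rfl | hv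
  · obtain ⟨p, rfl⟩ := Int.exists_eq_neg_ofNat hv.le
    have hp : 1 ≤ p := by omega
    have hshift : ∀ i : ℕ, (-(p : ℤ) + i).toNat = i - p := fun i => by omega
    simp [hp, hshift, mul_ite, show ¬ (p : ℤ) < 0 by omega, show p ≠ 0 by omega]
  · simp [show 0 < j by omega, show 0 < k by omega, add_assoc]
  · lift v to ℕ using hv.le
    have hv : 1 ≤ v := by omega
    have hshift : ∀ i : ℕ, ((v : ℤ) + i).toNat = v + i := fun i => by omega
    have hassoc := hH j k v hj hk hv
    simp only [mul_comm (H k _) (H j _), Nat.add_comm j v] at hassoc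
    simp only [Nat.cast_add, neg_add_rev, ↓reduceIte, hshift, Int.natAbs_natCast, Int.natCast_pos,
      Int.toNat_natCast, zero_add, Int.natCast_eq_zero, add_zero, show 0 < v by omega,
      show v ≠ 0 by omega, show ¬ (v : ℤ) < 0 by omega, show ∀ x : ℕ, (v : ℤ) ≠ -x by omega,
      show ∀ x : ℕ, 0 < (v : ℤ) + x by omega]
    linear_combination -hassoc

theorem series_mem_adjoin (hH : IsAssoc H) {n : ℕ} (hn : 1 ≤ n) :
    series H n ∈ Algebra.adjoin R {series H 1} := by
  induction n using Nat.strong_induction_on with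
  | _ n ih =>
    obtain rfl | ⟨m, rfl⟩ : n = 1 ∨ ∃ m, n = m + 2 := by
      rcases n with _ | _ | m <;> simp_all
    · exact Algebra.subset_adjoin rfl
    have hrec := series_mul_series H hH (j := m + 1) le_add_self le_rfl
    rw [Finset.Ico_self, Finset.sum_empty, add_zero] at hrec
    rw [show series H (m + 2) = series H (m + 1) * series H 1
      - ∑ l ∈ Finset.Ico 1 (m + 1), C (H 1 (m + 1 - l)) * series H l
      - C (H 1 (m + 1) + H (m + 1) 1) by rw [hrec]; ring]
    have hC : ∀ c : R, C c ∈ Algebra.adjoin R {series H 1} := fun c =>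
      algebraMap_eq_C c ▸ Subalgebra.algebraMap_mem _ c
    refine sub_mem (sub_mem (mul_mem (ih _ (by omega) le_add_self) (ih 1 (by omega) le_rfl))
      (sum_mem fun l hl => ?_)) (hC _)
    obtain ⟨hl1, hlm⟩ := Finset.mem_Ico.mp hl
    exact mul_mem (hC _) (ih l (by omega) hl1)

theorem coeff_zero_series_mul_eulerDeriv_series {i n : ℕ} (hi : 1 ≤ i) (hn : 1 ≤ n) :
    (series H i * eulerDeriv (series H n)).coeff 0 = i * H n i - n * H i n := by
  have hDtail : ∀ v < 0, (eulerDeriv (tail H n : R⸨X⸩)).coeff v = 0 := fun v hv => by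
    simp [coeff_coe_tail, hv.not_gt]
  rw [series, series, map_add, eulerDeriv_single, add_mul, mul_add, mul_add]
  simp only [HahnSeries.coeff_add]
  rw [coeff_zero_mul_eq_zero (F := (tail H i : R⸨X⸩))
    (fun v hv => by simp [coeff_coe_tail, hv.not_gt]) hDtail, add_zero]
  simp only [single_mul_single, coeff_single, coeff_single_mul, coeff_mul_single]
  simp only [↓reduceIte, sub_neg_eq_add, zero_add, coeff_eulerDeriv, Int.cast_natCast,
    coeff_coe_tail, Int.natCast_pos, Int.toNat_natCast, one_mul, Int.cast_neg, mul_one, mul_neg,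
    show (0 : ℤ) ≠ -i + -n by omega, show 0 < i by omega, show 0 < n by omega]
  ring

end BigCell

/-- the big-cell associativity conditions imply `n H^i_n = i H^n_i`. -/
theorem bigcell_associativity_symmetry (H : ℕ → ℕ → ℂ)
    (hassoc : ∀ j k m : ℕ, 1 ≤ j → 1 ≤ k → 1 ≤ m →
      H (j + k) m - H j (m + k) - H k (j + m)
        + ∑ l ∈ Finset.Ico 1 j, H k (j - l) * H l m
        + ∑ l ∈ Finset.Ico 1 k, H j (k - l) * H l m
        - ∑ l ∈ Finset.Ico 1 m, H k (m - l) * H j l = 0) :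
    ∀ i n : ℕ, 1 ≤ i → 1 ≤ n → (n : ℂ) * H i n = (i : ℂ) * H n i := by
  intro i n hi hn
  have hres := coeff_zero_mul_eulerDeriv_of_mem_adjoin
    (BigCell.series_mem_adjoin H hassoc hi) (BigCell.series_mem_adjoin H hassoc hn)
  rw [BigCell.coeff_zero_series_mul_eulerDeriv_series H hi hn] at hres
  linear_combination -hres
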